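/- Let C = C1 ∪ C2 be a dumbbell curve and D a divisor with deg(D|_{C_i}) = 2 whose support consists of exactly three distinct smooth points, one of which has multiplicity 2. Then the double cover of C branched along D is a 3-cycle of rational curves. -/

import Mathlib

open MvPolynomial

section DumbbellAux

variable {k : Type*} [Field k]

noncomputable abbrev RR (k : Type*) [Field k] := MvPolynomial (Fin 3) k
noncomputable abbrev AA (k : Type*) [Field k] := Polynomial k
noncomputable abbrev SS (k : Type*) [Field k] := Polynomial (Polynomial k)

lemma mem_span_pair' {R : Type*} [CommRing R] {a b g : R} (p q : R)
    (h : p * a + q * b = g) : g ∈ Ideal.span {a, b} :=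
  Ideal.mem_span_pair.mpr ⟨p, q, h⟩

lemma mem_span_triple' {R : Type*} [CommRing R] {a b c g : R} (p q r : R)
    (h : p * a + q * b + r * c = g) : g ∈ Ideal.span {a, b, c} := by
  have ha : a ∈ Ideal.span {a, b, c} := Ideal.subset_span (by simp)
  have hb : b ∈ Ideal.span {a, b, c} := Ideal.subset_span (by simp)
  have hc : c ∈ Ideal.span {a, b, c} := Ideal.subset_span (by simp)
  rw [← h]
  exact add_mem (add_mem (Ideal.mul_mem_left _ _ ha) (Ideal.mul_mem_left _ _ hb))
    (Ideal.mul_mem_left _ _ hc)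

lemma not_sq' (s t : k) (hst : s ≠ t) (c : Polynomial k) :
    c ^ 2 ≠ (Polynomial.X - Polynomial.C s) * (Polynomial.X - Polynomial.C t) := by
  intro h
  have h1 : c.eval s = 0 := by
    have := congrArg (Polynomial.eval s) h
    simp only [Polynomial.eval_pow, Polynomial.eval_mul, Polynomial.eval_sub,
      Polynomial.eval_X, Polynomial.eval_C, sub_self, zero_mul] at this
    exact pow_eq_zero_iff (n := 2) (by norm_num) |>.mp this
  have h2 : (Polynomial.X - Polynomial.C s) ∣ c := Polynomial.dvd_iff_isRoot.mpr h1
  obtain ⟨d, hd⟩ := h2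
  have hXs : (Polynomial.X - Polynomial.C s : Polynomial k) ≠ 0 := Polynomial.X_sub_C_ne_zero s
  have : (Polynomial.X - Polynomial.C s) * ((Polynomial.X - Polynomial.C s) * d ^ 2)
      = (Polynomial.X - Polynomial.C s) * (Polynomial.X - Polynomial.C t) := by
    rw [← h, hd]; ring
  have h3 := mul_left_cancel₀ hXs this
  have := congrArg (Polynomial.eval s) h3
  simp at this
  exact hst (sub_eq_zero.mp this.symm)

/-- the polynomial `W² - (x-s)(x-t)` in `k[x][W]` -/
noncomputable def qpoly (s t : k) : SS k :=
  Polynomial.X ^ 2 - Polynomial.C ((Polynomial.X - Polynomial.C s) * (Polynomial.X - Polynomial.C t))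

lemma qpoly_monic (s t : k) : (qpoly s t).Monic :=
  Polynomial.monic_X_pow_sub_C _ (two_ne_zero)

lemma qpoly_natDegree (s t : k) : (qpoly s t).natDegree = 2 := by
  exact Polynomial.natDegree_X_pow_sub_C

lemma irred_qpoly (s t : k) (hst : s ≠ t) : Irreducible (qpoly s t) := by
  constructor
  · exact Polynomial.not_isUnit_of_natDegree_pos _ (by rw [qpoly_natDegree]; norm_num)
  · intro g h hgh
    have hq0 : qpoly s t ≠ 0 := (qpoly_monic s t).ne_zero
    have hg0 : g ≠ 0 := fun h0 => hq0 (by simp [hgh, h0])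
    have hh0 : h ≠ 0 := fun h0 => hq0 (by simp [hgh, h0])
    have hdeg : g.natDegree + h.natDegree = 2 := by
      rw [← Polynomial.natDegree_mul hg0 hh0, ← hgh, qpoly_natDegree]
    have hlc : g.leadingCoeff * h.leadingCoeff = 1 := by
      rw [← Polynomial.leadingCoeff_mul, ← hgh]; exact (qpoly_monic s t)
    have hcases : g.natDegree = 0 ∨ g.natDegree = 1 ∨ g.natDegree = 2 := by omega
    rcases hcases with hgd | hgd | hgd
    · left
      have hc0 : g.coeff 0 = g.leadingCoeff := by rw [Polynomial.leadingCoeff, hgd]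
      rw [Polynomial.eq_C_of_natDegree_eq_zero hgd]
      exact Polynomial.isUnit_C.mpr (IsUnit.of_mul_eq_one h.leadingCoeff (by rw [hc0]; exact hlc))
    · exfalso
      have hhd : h.natDegree = 1 := by omega
      set r : Polynomial k := -(g.coeff 0 * h.leadingCoeff) with hr
      have hgr : g.eval r = 0 := by
        have hg := Polynomial.eq_X_add_C_of_natDegree_le_one (le_of_eq hgd)
        have hglc : g.coeff 1 = g.leadingCoeff := by rw [Polynomial.leadingCoeff, hgd]
        rw [hg]
        simp only [Polynomial.eval_add, Polynomial.eval_mul, Polynomial.eval_C, Polynomial.eval_X]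
        rw [hglc, hr]
        ring_nf
        rw [mul_comm g.leadingCoeff h.leadingCoeff] at hlc
        linear_combination (-(g.coeff 0)) * hlc
      have hqr : (qpoly s t).eval r = 0 := by rw [hgh]; simp [hgr]
      have : r ^ 2 = (Polynomial.X - Polynomial.C s) * (Polynomial.X - Polynomial.C t) := by
        have : r ^ 2 - (Polynomial.X - Polynomial.C s) * (Polynomial.X - Polynomial.C t) = 0 := by
          simpa [qpoly] using hqr
        linear_combination this
      exact not_sq' s t hst r this
    · right
      have hhd : h.natDegree = 0 := by omega
      have hc0 : h.coeff 0 = h.leadingCoeff := by rw [Polynomial.leadingCoeff, hhd]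
      rw [Polynomial.eq_C_of_natDegree_eq_zero hhd]
      refine Polynomial.isUnit_C.mpr (IsUnit.of_mul_eq_one g.leadingCoeff ?_)
      rw [hc0, mul_comm]; exact hlc

lemma prime_qpoly (s t : k) (hst : s ≠ t) : Prime (qpoly s t) :=
  (UniqueFactorizationMonoid.irreducible_iff_prime).mp (irred_qpoly s t hst)

/-! ### the ring homomorphisms -/

noncomputable def eS (k : Type*) [Field k] : RR k →+* SS k :=
  (eval₂Hom ((Polynomial.C).comp (Polynomial.C)) ![Polynomial.C Polynomial.X, 0, Polynomial.X])

noncomputable def psiS (k : Type*) [Field k] : SS k →+* RR k :=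
  Polynomial.eval₂RingHom (Polynomial.eval₂RingHom (MvPolynomial.C) (X 0)) (X 2)

noncomputable def eA (u : k) (sgn : k) : RR k →+* AA k :=
  eval₂Hom Polynomial.C ![0, Polynomial.X, sgn • (Polynomial.X - Polynomial.C u)]

noncomputable def psiA (k : Type*) [Field k] : AA k →+* RR k :=
  Polynomial.eval₂RingHom (MvPolynomial.C) (X 1)

@[simp] lemma eS_X0 : eS k (X 0) = Polynomial.C Polynomial.X := by simp [eS]
@[simp] lemma eS_X1 : eS k (X 1) = 0 := by simp [eS]
@[simp] lemma eS_X2 : eS k (X 2) = Polynomial.X := by simp [eS]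
@[simp] lemma eS_C (a : k) : eS k (C a) = Polynomial.C (Polynomial.C a) := by simp [eS]
@[simp] lemma psiS_X : psiS k Polynomial.X = X 2 := by simp [psiS]
@[simp] lemma psiS_CX : psiS k (Polynomial.C Polynomial.X) = X 0 := by simp [psiS]
@[simp] lemma psiS_CC (a : k) : psiS k (Polynomial.C (Polynomial.C a)) = C a := by simp [psiS]
@[simp] lemma eA_X0 (u sgn : k) : eA u sgn (X 0) = 0 := by simp [eA]
@[simp] lemma eA_X1 (u sgn : k) : eA u sgn (X 1) = Polynomial.X := by simp [eA]
@[simp] lemma eA_X2 (u sgn : k) :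
    eA u sgn (X 2) = Polynomial.C sgn * (Polynomial.X - Polynomial.C u) := by
  simp [eA, Polynomial.smul_eq_C_mul]
@[simp] lemma eA_C (u sgn a : k) : eA u sgn (C a) = Polynomial.C a := by simp [eA]
@[simp] lemma psiA_X : psiA k Polynomial.X = X 1 := by simp [psiA]
@[simp] lemma psiA_C (a : k) : psiA k (Polynomial.C a) = C a := by simp [psiA]

lemma sub_section_mem {B : Type*} [CommRing B] (phi : RR k →+* B) (psi : B →+* RR k)
    (T : Ideal (RR k)) (hC : ∀ a : k, psi (phi (MvPolynomial.C a)) = MvPolynomial.C a)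
    (hX : ∀ i, X i - psi (phi (X i)) ∈ T) : ∀ g : RR k, g - psi (phi g) ∈ T := by
  intro g
  induction g using MvPolynomial.induction_on with
  | C a => simp [hC]
  | add p q hp hq =>
      have := add_mem hp hq
      convert this using 1
      rw [map_add, map_add]; ring
  | mul_X p n hp =>
      have := add_mem (T.mul_mem_right (X n) hp) (T.mul_mem_left (psi (phi p)) (hX n))
      convert this using 1
      rw [map_mul, map_mul]; ring

lemma sub_psiS_eS_mem (g : RR k) : g - psiS k (eS k g) ∈ Ideal.span {(X 1 : RR k)} := by
  refine sub_section_mem (eS k) (psiS k) _ (fun a => by simp) (fun i => ?_) g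
  fin_cases i
  · show (X 0 : RR k) - psiS k (eS k (X 0)) ∈ _
    simp
  · show (X 1 : RR k) - psiS k (eS k (X 1)) ∈ _
    simp only [eS_X1, map_zero, sub_zero]
    exact Ideal.subset_span rfl
  · show (X 2 : RR k) - psiS k (eS k (X 2)) ∈ _
    simp

lemma sub_psiA_eA_mem (u : k) (sgn : k) (g : RR k) :
    g - psiA k (eA u sgn g) ∈
      Ideal.span {(X 0 : RR k), X 2 - C sgn * (X 1 - C u)} := by
  refine sub_section_mem (eA u sgn) (psiA k) _ (fun a => by simp) (fun i => ?_) g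
  fin_cases i
  · show (X 0 : RR k) - psiA k (eA u sgn (X 0)) ∈ _
    simpa using Ideal.subset_span (by simp)
  · show (X 1 : RR k) - psiA k (eA u sgn (X 1)) ∈ _
    simp
  · show (X 2 : RR k) - psiA k (eA u sgn (X 2)) ∈ _
    simp only [eA_X2, map_mul, map_sub, psiA_C, psiA_X]
    exact Ideal.subset_span (by simp)

lemma eA_eq_zero_iff (u : k) (sgn : k) (g : RR k) :
    eA u sgn g = 0 ↔ g ∈ Ideal.span {(X 0 : RR k), X 2 - C sgn * (X 1 - C u)} := by
  constructor
  · intro h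
    have := sub_psiA_eA_mem u sgn g
    rwa [h, map_zero, sub_zero] at this
  · intro h
    rw [Ideal.mem_span_pair] at h
    obtain ⟨p, q, rfl⟩ := h
    simp only [map_add, map_mul, eA_X0, eA_X2, eA_X1, map_sub, eA_C]
    ring

lemma ker_eA (u : k) (sgn : k) :
    RingHom.ker (eA u sgn) = Ideal.span {(X 0 : RR k), X 2 - C sgn * (X 1 - C u)} := by
  ext g
  rw [RingHom.mem_ker, eA_eq_zero_iff]

lemma eA_surjective (u : k) (sgn : k) : Function.Surjective (eA u sgn) := by
  intro p
  refine ⟨psiA k p, ?_⟩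
  have : (eA u sgn).comp (psiA k) = RingHom.id (AA k) := by
    apply Polynomial.ringHom_ext
    · intro a; simp
    · simp
  exact congrArg (fun φ => φ p) this

noncomputable def quotEquiv (u : k) (sgn : k) :
    (RR k ⧸ Ideal.span {(X 0 : RR k), X 2 - C sgn * (X 1 - C u)}) ≃+* AA k :=
  (Ideal.quotEquivOfEq (ker_eA u sgn).symm).trans
    (RingHom.quotientKerEquivOfSurjective (eA_surjective u sgn))

lemma span₂_eq (u : k) :
    Ideal.span {(X 0 : RR k), X 2 - (X 1 - C u)}
      = Ideal.span {(X 0 : RR k), X 2 - C (1 : k) * (X 1 - C u)} := by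
  rw [map_one, one_mul]

lemma span₃_eq (u : k) :
    Ideal.span {(X 0 : RR k), X 2 + (X 1 - C u)}
      = Ideal.span {(X 0 : RR k), X 2 - C (-1 : k) * (X 1 - C u)} := by
  have h : (X 2 - C (-1 : k) * (X 1 - C u) : RR k) = X 2 + (X 1 - C u) := by
    rw [map_neg, map_one]; ring
  rw [h]

/-! ### the component over `C₁` -/

lemma psiS_qpoly (s t : k) :
    psiS k (qpoly s t) = X 2 ^ 2 - (X 0 - C s) * (X 0 - C t) := by
  simp [qpoly]

lemma eS_wP (s t : k) :
    eS k ((X 2 : RR k) ^ 2 - (X 0 - C s) * (X 0 - C t)) = qpoly s t := by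
  simp [qpoly]

lemma ker_comp_eS (s t : k) :
    RingHom.ker ((Ideal.Quotient.mk (Ideal.span {qpoly s t})).comp (eS k)) =
      Ideal.span {(X 1 : RR k), X 2 ^ 2 - (X 0 - C s) * (X 0 - C t)} := by
  ext g
  simp only [RingHom.mem_ker, RingHom.comp_apply, Ideal.Quotient.eq_zero_iff_mem,
    Ideal.mem_span_singleton]
  constructor
  · rintro ⟨d, hd⟩
    have h1 := sub_psiS_eS_mem (k := k) g
    rw [Ideal.mem_span_singleton] at h1
    obtain ⟨r, hr⟩ := h1
    have : g = X 1 * r + psiS k (qpoly s t) * psiS k d := by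
      rw [← map_mul, ← hd, ← hr]; ring
    rw [this, psiS_qpoly]
    exact Ideal.add_mem _ (Ideal.mul_mem_right _ _ (Ideal.subset_span (by simp)))
      (Ideal.mul_mem_right _ _ (Ideal.subset_span (by simp)))
  · intro hg
    rw [Ideal.mem_span_pair] at hg
    obtain ⟨p, q, rfl⟩ := hg
    refine ⟨eS k q, ?_⟩
    rw [map_add, map_mul, map_mul, eS_X1, eS_wP]
    ring

lemma I₁_prime (s t : k) (hst : s ≠ t) :
    (Ideal.span {(X 1 : RR k), X 2 ^ 2 - (X 0 - C s) * (X 0 - C t)}).IsPrime := by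
  rw [← ker_comp_eS s t]
  haveI hprime : (Ideal.span {qpoly s t}).IsPrime :=
    (Ideal.span_singleton_prime (prime_qpoly s t hst).ne_zero).mpr (prime_qpoly s t hst)
  haveI : IsDomain (SS k ⧸ Ideal.span {qpoly s t}) := Ideal.Quotient.isDomain _
  exact RingHom.ker_isPrime _

end DumbbellAux

section DumbbellMain

variable {k : Type*} [Field k] [CharZero k]

lemma components_eq (s t u : k) (hst : s ≠ t)
    (hcomp : u ^ 2 = s * t) :
    Ideal.span {(X 0 : RR k) * X 1,
        X 2 ^ 2 - ((X 0 - C s) * (X 0 - C t) + (X 1 - C u) ^ 2 - C (s * t))}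
      = Ideal.span {(X 1 : RR k), X 2 ^ 2 - (X 0 - C s) * (X 0 - C t)}
        ⊓ Ideal.span {(X 0 : RR k), X 2 - (X 1 - C u)}
        ⊓ Ideal.span {(X 0 : RR k), X 2 + (X 1 - C u)} := by
  have hCst : (C (s * t) : RR k) = C s * C t := by rw [map_mul]
  have hC2 : (C (s * t) : RR k) = C u ^ 2 := by rw [← map_pow, hcomp]
  -- the key rewriting identities
  have hw : (X 2 : RR k) ^ 2 - (X 0 - C s) * (X 0 - C t)
      = (X 2 ^ 2 - ((X 0 - C s) * (X 0 - C t) + (X 1 - C u) ^ 2 - C (s * t)))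
        + X 1 * (X 1 - 2 * C u) := by
    linear_combination -hC2
  have hx : (X 2 : RR k) ^ 2 - (X 1 - C u) ^ 2
      = (X 2 ^ 2 - ((X 0 - C s) * (X 0 - C t) + (X 1 - C u) ^ 2 - C (s * t)))
        + X 0 * (X 0 - C s - C t) := by
    linear_combination -hCst
  apply le_antisymm
  · refine le_inf (le_inf ?_ ?_) ?_
    · rw [Ideal.span_le]
      rintro r hr
      simp only [Set.mem_insert_iff, Set.mem_singleton_iff] at hr
      rcases hr with rfl | rfl
      · exact mem_span_pair' (X 0) 0 (by ring)
      · exact mem_span_pair' (-(X 1 - 2 * C u)) 1 (by linear_combination -hC2)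
    · rw [Ideal.span_le]
      rintro r hr
      simp only [Set.mem_insert_iff, Set.mem_singleton_iff] at hr
      rcases hr with rfl | rfl
      · exact mem_span_pair' (X 1) 0 (by ring)
      · exact mem_span_pair' (-(X 0 - C s - C t)) (X 2 + (X 1 - C u))
          (by linear_combination -hCst)
    · rw [Ideal.span_le]
      rintro r hr
      simp only [Set.mem_insert_iff, Set.mem_singleton_iff] at hr
      rcases hr with rfl | rfl
      · exact mem_span_pair' (X 1) 0 (by ring)
      · exact mem_span_pair' (-(X 0 - C s - C t)) (X 2 - (X 1 - C u))
          (by linear_combination -hCst)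
  · intro g hg
    obtain ⟨⟨hg1, hg2⟩, hg3⟩ := hg
    -- Step 1 : `g ∈ I₂ ⊓ I₃` implies `g ∈ (x, w² - (y-u)²)`
    obtain ⟨a, b, hab⟩ := Ideal.mem_span_pair.mp hg2
    have heg3 : eA u (-1) g = 0 :=
      (eA_eq_zero_iff u (-1) g).mpr (by rw [← span₃_eq]; exact hg3)
    have h0 : eA u (-1) b * ((2 : AA k) * (Polynomial.X - Polynomial.C u)) = 0 := by
      have h := congrArg (eA u (-1)) hab
      rw [heg3] at h
      simp only [map_add, map_mul, map_sub, eA_X0, eA_X1, eA_X2, eA_C, map_neg,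
        map_one, mul_zero, zero_mul, neg_mul, one_mul] at h
      linear_combination -h
    have hb0 : eA u (-1) b = 0 := by
      rcases mul_eq_zero.mp h0 with h | h
      · exact h
      · exact absurd h (mul_ne_zero (by norm_num) (Polynomial.X_sub_C_ne_zero u))
    have hbI3 : b ∈ Ideal.span {(X 0 : RR k), X 2 + (X 1 - C u)} := by
      rw [span₃_eq]
      exact (eA_eq_zero_iff u (-1) b).mp hb0
    obtain ⟨c, d, hcd⟩ := Ideal.mem_span_pair.mp hbI3
    have hgJ : g ∈ Ideal.span {(X 0 : RR k), X 2 ^ 2 - (X 1 - C u) ^ 2} := by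
      refine mem_span_pair' (a + c * (X 2 - (X 1 - C u))) d ?_
      linear_combination hab + (X 2 - (X 1 - C u)) * hcd
    -- Step 2 : `g ∈ I₁ ⊓ J` implies `g ∈ I`
    obtain ⟨a1, b1, h1⟩ := Ideal.mem_span_pair.mp hg1
    obtain ⟨al, be, h2⟩ := Ideal.mem_span_pair.mp hgJ
    have k1 : g - b1 * (X 2 ^ 2 - ((X 0 - C s) * (X 0 - C t) + (X 1 - C u) ^ 2 - C (s * t)))
        = (a1 + b1 * (X 1 - 2 * C u)) * X 1 := by
      linear_combination -h1 + b1 * hw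
    have k2 : g - be * (X 2 ^ 2 - ((X 0 - C s) * (X 0 - C t) + (X 1 - C u) ^ 2 - C (s * t)))
        = (al + be * (X 0 - C s - C t)) * X 0 := by
      linear_combination -h2 + be * hx
    have k3 : (a1 + b1 * (X 1 - 2 * C u)) * X 1 - (al + be * (X 0 - C s - C t)) * X 0
        = (be - b1) * (X 2 ^ 2 - ((X 0 - C s) * (X 0 - C t) + (X 1 - C u) ^ 2 - C (s * t))) := by
      linear_combination k2 - k1
    -- push `k3` into `k[x][w]` and use primality of `qpoly`
    have heSwf : eS k ((X 2 : RR k) ^ 2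
        - ((X 0 - C s) * (X 0 - C t) + (X 1 - C u) ^ 2 - C (s * t))) = qpoly s t := by
      have hq2 : (Polynomial.C (Polynomial.C u) : SS k) ^ 2
          = Polynomial.C (Polynomial.C s) * Polynomial.C (Polynomial.C t) := by
        rw [← map_pow, ← map_pow, hcomp, map_mul, map_mul]
      simp only [map_sub, map_add, map_mul, map_pow, eS_X0, eS_X1, eS_X2, eS_C, qpoly]
      linear_combination -hq2
    have hdvd : qpoly s t ∣ eS k (al + be * (X 0 - C s - C t)) * Polynomial.C Polynomial.X := by
      refine ⟨eS k (b1 - be), ?_⟩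
      have hq2 : (Polynomial.C (Polynomial.C u) : SS k) ^ 2
          = Polynomial.C (Polynomial.C s) * Polynomial.C (Polynomial.C t) := by
        rw [← map_pow, ← map_pow, hcomp, map_mul, map_mul]
      have h := congrArg (eS k) k3
      simp only [map_sub, map_mul, map_add, map_pow, eS_X1, eS_X0, eS_X2, eS_C,
        mul_zero, zero_mul, zero_sub] at h
      simp only [qpoly, map_sub, map_mul, map_add, map_pow, eS_X0, eS_X1, eS_X2, eS_C]
      linear_combination -h + ((eS k) be - (eS k) b1) * hq2
    have hnd : ¬ qpoly s t ∣ (Polynomial.C Polynomial.X : SS k) := by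
      intro h
      have hCX : (Polynomial.C Polynomial.X : SS k) ≠ 0 := by
        simpa using Polynomial.X_ne_zero
      have := Polynomial.natDegree_le_of_dvd h hCX
      rw [qpoly_natDegree, Polynomial.natDegree_C] at this
      omega
    have hqga : qpoly s t ∣ eS k (al + be * (X 0 - C s - C t)) := by
      rcases (prime_qpoly s t hst).2.2 _ _ hdvd with h | h
      · exact h
      · exact absurd h hnd
    obtain ⟨de, hde⟩ := hqga
    obtain ⟨rh, hrh⟩ := Ideal.mem_span_singleton.mp
      (sub_psiS_eS_mem (k := k) (al + be * (X 0 - C s - C t)))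
    have hga2 : al + be * ((X 0 : RR k) - C s - C t)
        = (X 2 ^ 2 - (X 0 - C s) * (X 0 - C t)) * psiS k de + X 1 * rh := by
      have e1 : psiS k (eS k (al + be * ((X 0 : RR k) - C s - C t)))
          = (X 2 ^ 2 - (X 0 - C s) * (X 0 - C t)) * psiS k de := by
        rw [hde, map_mul, psiS_qpoly]
      linear_combination hrh + e1
    -- assemble the membership
    set W : RR k := X 2 ^ 2 - ((X 0 - C s) * (X 0 - C t) + (X 1 - C u) ^ 2 - C (s * t)) with hW
    have hxyI : (X 0 : RR k) * X 1 ∈ Ideal.span {(X 0 : RR k) * X 1, W} :=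
      Ideal.subset_span (by simp)
    have hwfI : W ∈ Ideal.span {(X 0 : RR k) * X 1, W} := Ideal.subset_span (by simp)
    have m1 : (al + be * ((X 0 : RR k) - C s - C t)) * X 0
        ∈ Ideal.span {(X 0 : RR k) * X 1, W} := by
      have : (al + be * ((X 0 : RR k) - C s - C t)) * X 0
          = ((X 1 - 2 * C u) * psiS k de + rh) * (X 0 * X 1) + (psiS k de * X 0) * W := by
        rw [hW]
        linear_combination X 0 * hga2 + (psiS k de * X 0) * hw
      rw [this]
      exact add_mem (Ideal.mul_mem_left _ _ hxyI) (Ideal.mul_mem_left _ _ hwfI)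
    have m2 : (a1 + b1 * ((X 1 : RR k) - 2 * C u)) * X 1
        ∈ Ideal.span {(X 0 : RR k) * X 1, W} := by
      have : (a1 + b1 * ((X 1 : RR k) - 2 * C u)) * X 1
          = (al + be * (X 0 - C s - C t)) * X 0 + (be - b1) * W := by
        rw [hW]; linear_combination k3
      rw [this]
      exact add_mem m1 (Ideal.mul_mem_left _ _ hwfI)
    have hfin : g = (a1 + b1 * ((X 1 : RR k) - 2 * C u)) * X 1 + b1 * W := by
      rw [hW]; linear_combination k1
    rw [hfin]
    exact add_mem m2 (Ideal.mul_mem_left _ _ hwfI)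

end DumbbellMain

section DumbbellRest

variable {k : Type*} [Field k] [CharZero k]

lemma iso₂aux (u : k) :
    Nonempty ((RR k ⧸ Ideal.span {(X 0 : RR k), X 2 - (X 1 - C u)}) ≃+* AA k) :=
  ⟨(Ideal.quotEquivOfEq (span₂_eq u)).trans (quotEquiv u 1)⟩

lemma iso₃aux (u : k) :
    Nonempty ((RR k ⧸ Ideal.span {(X 0 : RR k), X 2 + (X 1 - C u)}) ≃+* AA k) :=
  ⟨(Ideal.quotEquivOfEq (span₃_eq u)).trans (quotEquiv u (-1))⟩

lemma smooth_aux (s t : k) (hst : s ≠ t) :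
    ∀ a c : k, c ^ 2 = (a - s) * (a - t) → ¬(2 * c = 0 ∧ 2 * a - (s + t) = 0) := by
  rintro a c h ⟨h1, h2⟩
  have h2k : (2 : k) ≠ 0 := two_ne_zero
  have hc : c = 0 := by
    rcases mul_eq_zero.mp h1 with h' | h'
    · exact absurd h' h2k
    · exact h'
  have h0 : (0 : k) = (a - s) * (a - t) := by rw [← h, hc]; ring
  have hsq : (s - t) ^ 2 = 0 := by
    linear_combination (2 * a - (s + t)) * h2 + 4 * h0
  exact hst (sub_eq_zero.mp (pow_eq_zero_iff (two_ne_zero) |>.mp hsq))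

lemma sup12aux (s t u : k) (hcomp : u ^ 2 = s * t) :
    Ideal.span {(X 1 : RR k), X 2 ^ 2 - (X 0 - C s) * (X 0 - C t)}
        ⊔ Ideal.span {(X 0 : RR k), X 2 - (X 1 - C u)}
      = Ideal.span {(X 0 : RR k), X 1, X 2 + C u} := by
  have hCu2 : (C u : RR k) ^ 2 = C s * C t := by rw [← map_pow, hcomp, map_mul]
  apply le_antisymm
  · refine sup_le (Ideal.span_le.mpr ?_) (Ideal.span_le.mpr ?_)
    · rintro r hr
      simp only [Set.mem_insert_iff, Set.mem_singleton_iff] at hr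
      rcases hr with rfl | rfl
      · exact mem_span_triple' 0 1 0 (by ring)
      · exact mem_span_triple' (-(X 0 - C s - C t)) 0 (X 2 - C u)
          (by linear_combination -hCu2)
    · rintro r hr
      simp only [Set.mem_insert_iff, Set.mem_singleton_iff] at hr
      rcases hr with rfl | rfl
      · exact mem_span_triple' 1 0 0 (by ring)
      · exact mem_span_triple' 0 (-1) 1 (by ring)
  · rw [Ideal.span_le]
    rintro r hr
    simp only [Set.mem_insert_iff, Set.mem_singleton_iff] at hr
    rcases hr with rfl | rfl | rfl
    · exact Ideal.mem_sup_right (Ideal.subset_span (by simp))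
    · exact Ideal.mem_sup_left (Ideal.subset_span (by simp))
    · have hid : (X 2 : RR k) + C u = (X 2 - (X 1 - C u)) + X 1 := by ring
      rw [hid]
      exact add_mem (Ideal.mem_sup_right (Ideal.subset_span (by simp)))
        (Ideal.mem_sup_left (Ideal.subset_span (by simp)))

lemma sup13aux (s t u : k) (hcomp : u ^ 2 = s * t) :
    Ideal.span {(X 1 : RR k), X 2 ^ 2 - (X 0 - C s) * (X 0 - C t)}
        ⊔ Ideal.span {(X 0 : RR k), X 2 + (X 1 - C u)}
      = Ideal.span {(X 0 : RR k), X 1, X 2 - C u} := by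
  have hCu2 : (C u : RR k) ^ 2 = C s * C t := by rw [← map_pow, hcomp, map_mul]
  apply le_antisymm
  · refine sup_le (Ideal.span_le.mpr ?_) (Ideal.span_le.mpr ?_)
    · rintro r hr
      simp only [Set.mem_insert_iff, Set.mem_singleton_iff] at hr
      rcases hr with rfl | rfl
      · exact mem_span_triple' 0 1 0 (by ring)
      · exact mem_span_triple' (-(X 0 - C s - C t)) 0 (X 2 + C u)
          (by linear_combination -hCu2)
    · rintro r hr
      simp only [Set.mem_insert_iff, Set.mem_singleton_iff] at hr
      rcases hr with rfl | rfl
      · exact mem_span_triple' 1 0 0 (by ring)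
      · exact mem_span_triple' 0 1 1 (by ring)
  · rw [Ideal.span_le]
    rintro r hr
    simp only [Set.mem_insert_iff, Set.mem_singleton_iff] at hr
    rcases hr with rfl | rfl | rfl
    · exact Ideal.mem_sup_right (Ideal.subset_span (by simp))
    · exact Ideal.mem_sup_left (Ideal.subset_span (by simp))
    · have hid : (X 2 : RR k) - C u = (X 2 + (X 1 - C u)) - X 1 := by ring
      rw [hid]
      exact sub_mem (Ideal.mem_sup_right (Ideal.subset_span (by simp)))
        (Ideal.mem_sup_left (Ideal.subset_span (by simp)))

lemma sup23aux (u : k) :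
    Ideal.span {(X 0 : RR k), X 2 - (X 1 - C u)}
        ⊔ Ideal.span {(X 0 : RR k), X 2 + (X 1 - C u)}
      = Ideal.span {(X 0 : RR k), X 1 - C u, X 2} := by
  have h2k : (2 : k) ≠ 0 := two_ne_zero
  have hhalf : (C (2⁻¹ : k) : RR k) * 2 = 1 := by
    rw [show ((2 : RR k)) = C (2 : k) from (map_ofNat (C : k →+* RR k) 2).symm,
      ← map_mul, inv_mul_cancel₀ h2k, map_one]
  apply le_antisymm
  · refine sup_le (Ideal.span_le.mpr ?_) (Ideal.span_le.mpr ?_)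
    · rintro r hr
      simp only [Set.mem_insert_iff, Set.mem_singleton_iff] at hr
      rcases hr with rfl | rfl
      · exact mem_span_triple' 1 0 0 (by ring)
      · exact mem_span_triple' 0 (-1) 1 (by ring)
    · rintro r hr
      simp only [Set.mem_insert_iff, Set.mem_singleton_iff] at hr
      rcases hr with rfl | rfl
      · exact mem_span_triple' 1 0 0 (by ring)
      · exact mem_span_triple' 0 1 1 (by ring)
  · rw [Ideal.span_le]
    rintro r hr
    simp only [Set.mem_insert_iff, Set.mem_singleton_iff] at hr
    rcases hr with rfl | rfl | rfl
    · exact Ideal.mem_sup_left (Ideal.subset_span (by simp))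
    · have hid : (X 1 : RR k) - C u
          = C (2⁻¹ : k) * (X 2 + (X 1 - C u)) - C (2⁻¹ : k) * (X 2 - (X 1 - C u)) := by
        linear_combination (C u - X 1) * hhalf
      have m3 : (X 2 + (X 1 - C u) : RR k) ∈ Ideal.span {(X 0 : RR k), X 2 + (X 1 - C u)} :=
        Ideal.subset_span (by simp)
      have m2' : (X 2 - (X 1 - C u) : RR k) ∈ Ideal.span {(X 0 : RR k), X 2 - (X 1 - C u)} :=
        Ideal.subset_span (by simp)
      have hmem := sub_mem (Ideal.mul_mem_left _ (C (2⁻¹ : k)) (Ideal.mem_sup_right m3))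
        (Ideal.mul_mem_left _ (C (2⁻¹ : k)) (Ideal.mem_sup_left m2'))
      rwa [← hid] at hmem
    · have hid : (X 2 : RR k)
          = C (2⁻¹ : k) * (X 2 + (X 1 - C u)) + C (2⁻¹ : k) * (X 2 - (X 1 - C u)) := by
        linear_combination (- X 2) * hhalf
      have m3 : (X 2 + (X 1 - C u) : RR k) ∈ Ideal.span {(X 0 : RR k), X 2 + (X 1 - C u)} :=
        Ideal.subset_span (by simp)
      have m2' : (X 2 - (X 1 - C u) : RR k) ∈ Ideal.span {(X 0 : RR k), X 2 - (X 1 - C u)} :=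
        Ideal.subset_span (by simp)
      have hmem := add_mem (Ideal.mul_mem_left _ (C (2⁻¹ : k)) (Ideal.mem_sup_right m3))
        (Ideal.mul_mem_left _ (C (2⁻¹ : k)) (Ideal.mem_sup_left m2'))
      rwa [← hid] at hmem

end DumbbellRest

/-- Let `C = C₁ ∪ C₂` be a dumbbell curve and `D` a divisor with
`deg (D|_{Cᵢ}) = 2` supported at exactly three distinct smooth points: two distinct points on
`C₁` and one point of multiplicity `2` on `C₂`.  Then the double cover of `C` branched along
`D` is a 3-cycle of rational curves.

Affine model (over an algebraically closed field of characteristic `0`): the dumbbell is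
`xy = 0` with node at the origin (`x = X 0` a coordinate on `C₁`, `y = X 1` on `C₂`), the
branch divisor is `x = s, t` on `C₁` (distinct, nonzero) and the doubled point `y = u` on `C₂`
(`u ≠ 0`), with `u² = s·t` (node compatibility), and the double cover is `w² = f` with
`w = X 2`, `f|_{C₁} = (x−s)(x−t)`, `f|_{C₂} = (y−u)²`.  We assert:
* the cover has exactly three irreducible components: `I₁` (the connected double cover of `C₁`
  branched at the two points, an irreducible smooth rational curve) and the split cover of
  `C₂`, which is the two lines `I₂`, `I₃` (each isomorphic to `𝔸¹`);
* the three components form a cycle: the pairwise intersections are the three distinct points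
  `(0,0,−u)`, `(0,0,u)` (over the node) and `(0,u,0)` (over the doubled branch point). -/
theorem double_cover_of_dumbbell_with_doubled_branch_point_is_three_cycle
    {k : Type*} [Field k] [IsAlgClosed k] [CharZero k]
    (s t u : k) (hst : s ≠ t) (hs : s ≠ 0) (ht : t ≠ 0) (hu : u ≠ 0)
    (hcomp : u ^ 2 = s * t) :
    let x : MvPolynomial (Fin 3) k := X 0
    let y : MvPolynomial (Fin 3) k := X 1
    let w : MvPolynomial (Fin 3) k := X 2
    let f := (x - C s) * (x - C t) + (y - C u) ^ 2 - C (s * t)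
    let I : Ideal (MvPolynomial (Fin 3) k) := Ideal.span {x * y, w ^ 2 - f}
    let I₁ : Ideal (MvPolynomial (Fin 3) k) :=
      Ideal.span {y, w ^ 2 - (x - C s) * (x - C t)}
    let I₂ : Ideal (MvPolynomial (Fin 3) k) := Ideal.span {x, w - (y - C u)}
    let I₃ : Ideal (MvPolynomial (Fin 3) k) := Ideal.span {x, w + (y - C u)}
    -- three irreducible components
    I = I₁ ⊓ I₂ ⊓ I₃ ∧ I₁.IsPrime ∧
    -- each of the two components over `C₂` is a line `𝔸¹`
    Nonempty ((MvPolynomial (Fin 3) k ⧸ I₂) ≃+* Polynomial k) ∧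
    Nonempty ((MvPolynomial (Fin 3) k ⧸ I₃) ≃+* Polynomial k) ∧
    -- the component over `C₁` is a smooth (hence rational) double cover of `ℙ¹`
    (∀ a c : k, c ^ 2 = (a - s) * (a - t) → ¬(2 * c = 0 ∧ 2 * a - (s + t) = 0)) ∧
    -- cyclic configuration: the pairwise intersections are three distinct single points
    I₁ ⊔ I₂ = Ideal.span {x, y, w + C u} ∧
    I₁ ⊔ I₃ = Ideal.span {x, y, w - C u} ∧
    I₂ ⊔ I₃ = Ideal.span {x, y - C u, w} := by
  intro x y w f I I₁ I₂ I₃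
  exact ⟨components_eq s t u hst hcomp, I₁_prime s t hst, iso₂aux u, iso₃aux u,
    smooth_aux s t hst, sup12aux s t u hcomp, sup13aux s t u hcomp, sup23aux u⟩
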